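/- arXiv:2111.02227 — 4 statements merged into one kernel-verified Lean document; each statement's English description precedes it below -/
import Mathlib

section
/- Let g ∈ L²(ℝ) be a window function and s > 0, and suppose the system of translates {T_{sk}(Rg) : k ∈ ℤ} is a Bessel sequence in L²(ℝ). Let c ∈ ℓ²(ℤ). Then the series f = Σ_{k∈ℤ} c_k T_{sk}(Rg) and f_× = Σ_{k∈ℤ} conj(c_k) T_{sk}(Rg) converge unconditionally in L²(ℝ), and |V_g f(x, n/s)| = |V_g f_×(x, n/s)| for every x ∈ ℝ and every n ∈ ℤ. -/
open MeasureTheory Complex Real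

/-- The short-time Fourier transform of `f ∈ L²(ℝ)` with respect to the window `g ∈ L²(ℝ)`:
`V_g f (x, ω) = ∫ f(t) conj(g(t-x)) e^{-2πiωt} dt`. -/
noncomputable def STFT (g f : Lp ℂ 2 (volume : Measure ℝ)) (x ω : ℝ) : ℂ :=
  ∫ t : ℝ, f t * (starRingEnd ℂ) (g (t - x)) * Complex.exp (-2 * Real.pi * Complex.I * ω * t)

/-- `f` and `h` agree up to a global phase: `f = ν • h` for some unimodular `ν ∈ ℂ`. -/
def SamePhase (f h : Lp ℂ 2 (volume : Measure ℝ)) : Prop :=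
  ∃ ν : ℂ, ‖ν‖ = 1 ∧ f = ν • h

/-- Translation operator `T_τ` on `L²(ℝ)`: `(T_τ f)(t) = f (t - τ)`. -/
noncomputable def Translate (τ : ℝ) (f : Lp ℂ 2 (volume : Measure ℝ)) :
    Lp ℂ 2 (volume : Measure ℝ) :=
  Lp.compMeasurePreserving (fun t => t - τ) (measurePreserving_sub_right volume τ) f

/-- Reflection operator on `L²(ℝ)`: `(R f)(t) = f (-t)`. -/
noncomputable def Reflect (f : Lp ℂ 2 (volume : Measure ℝ)) : Lp ℂ 2 (volume : Measure ℝ) :=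
  Lp.compMeasurePreserving (fun t => -t) (Measure.measurePreserving_neg volume) f

/-- A family `x : ℤ → L²(ℝ)` is a Bessel sequence if `∑ₖ |⟨f, xₖ⟩|² < ∞` for every `f ∈ L²(ℝ)`. -/
def IsBessel (x : ℤ → Lp ℂ 2 (volume : Measure ℝ)) : Prop :=
  ∀ f : Lp ℂ 2 (volume : Measure ℝ), Summable fun k : ℤ => ‖(inner ℂ f (x k) : ℂ)‖ ^ 2

/-!
The analysis operator `f ↦ (⟪x k, f⟫)ₖ` of a Bessel sequence is bounded by the closed graph
theorem, and its adjoint maps `c ∈ ℓ²(ℤ)` to `∑ₖ cₖ xₖ`; hence both series converge.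
The STFT at `(x, ω)` is the continuous functional `⟪M_ω T_x g, ·⟫`, and the substitution
`t ↦ τ + x - t` gives `V_g(T_τ R g)(x, ω) = e^{-2πiω(τ+x)} conj (V_g(T_τ R g)(x, ω))`.
For `τ = sk` and `ω = n/s` the factor `e^{-2πiωτ}` is `1`, so `conj (V_g f) = e^{2πiωx} V_g f_×`
holds term by term, and therefore for the sums.
-/

open ComplexConjugate

section Bessel

open InnerProductSpace Filter Topology

variable {𝕜 ι E : Type*} [RCLike 𝕜] [NormedAddCommGroup E] [InnerProductSpace 𝕜 E] {x : ι → E}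

lemma memℓp_inner_of_bessel (hx : ∀ f : E, Summable fun k => ‖⟪f, x k⟫_𝕜‖ ^ 2) (f : E) :
    Memℓp (fun k => ⟪x k, f⟫_𝕜) 2 :=
  memℓp_gen (by simpa [norm_inner_symm (x _)] using hx f)

noncomputable def besselAnalysisₗ (hx : ∀ f : E, Summable fun k => ‖⟪f, x k⟫_𝕜‖ ^ 2) :
    E →ₗ[𝕜] lp (fun _ : ι => 𝕜) 2 where
  toFun f := ⟨fun k => ⟪x k, f⟫_𝕜, memℓp_inner_of_bessel hx f⟩
  map_add' f h := by ext k; simp only [inner_add_right, AddSubgroup.coe_add]; rfl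
  map_smul' a f := by ext k; simp [inner_smul_right]

variable [CompleteSpace E]

noncomputable def besselAnalysis (hx : ∀ f : E, Summable fun k => ‖⟪f, x k⟫_𝕜‖ ^ 2) :
    E →L[𝕜] lp (fun _ : ι => 𝕜) 2 :=
  ContinuousLinearMap.ofSeqClosedGraph (g := besselAnalysisₗ hx) fun u f y hu hy => by
    ext k
    have hk : Tendsto (fun n => ⟪x k, u n⟫_𝕜) atTop (𝓝 (y k)) :=
      ((lp.evalCLM 𝕜 (fun _ : ι => 𝕜) 2 k).continuous.tendsto y).comp hy
    exact tendsto_nhds_unique hk ((continuous_const.inner continuous_id).tendsto f |>.comp hu)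

lemma besselAnalysis_apply (hx : ∀ f : E, Summable fun k => ‖⟪f, x k⟫_𝕜‖ ^ 2) (f : E) (k : ι) :
    besselAnalysis hx f k = ⟪x k, f⟫_𝕜 := rfl

lemma adjoint_besselAnalysis_single (hx : ∀ f : E, Summable fun k => ‖⟪f, x k⟫_𝕜‖ ^ 2)
    [DecidableEq ι] (k : ι) (a : 𝕜) :
    (besselAnalysis hx).adjoint (lp.single 2 k a) = a • x k :=
  ext_inner_right 𝕜 fun f => by
    rw [ContinuousLinearMap.adjoint_inner_left, lp.inner_single_left, besselAnalysis_apply,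
      inner_smul_left, RCLike.inner_apply, mul_comm]

theorem summable_smul_of_bessel (hx : ∀ f : E, Summable fun k => ‖⟪f, x k⟫_𝕜‖ ^ 2)
    (c : ι → 𝕜) (hc : Summable fun k => ‖c k‖ ^ 2) : Summable fun k => c k • x k := by
  classical
  have hc' : Memℓp c 2 := memℓp_gen (by simpa using hc)
  have := (besselAnalysis hx).adjoint.hasSum (lp.hasSum_single ENNReal.ofNat_ne_top ⟨c, hc'⟩)
  simp only [adjoint_besselAnalysis_single] at this
  exact this.summable

end Bessel

section STFT

open InnerProductSpace

local notation "L²" => Lp ℂ 2 (volume : Measure ℝ)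

lemma norm_exp_two_pi_I_mul_mul (a b : ℝ) : ‖exp (2 * π * I * a * b)‖ = 1 := by
  rw [show 2 * π * I * a * b = ((2 * π * a * b : ℝ) : ℂ) * I by push_cast; ring,
    norm_exp_ofReal_mul_I]

lemma memLp_modulate_translate (g : L²) (x ω : ℝ) :
    MemLp (fun t : ℝ => exp (2 * π * I * ω * t) * Translate x g t) 2 volume := by
  refine (memLp_congr_norm (Lp.aestronglyMeasurable _) ?_ ?_).1 (Lp.memLp (Translate x g))
  · exact (by fun_prop : Continuous fun t : ℝ => exp (2 * π * I * ω * t)).aestronglyMeasurable.mul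
      (Lp.aestronglyMeasurable _)
  · filter_upwards with t
    rw [norm_mul, norm_exp_two_pi_I_mul_mul, one_mul]

noncomputable def timeFreqShift (g : L²) (x ω : ℝ) : L² :=
  (memLp_modulate_translate g x ω).toLp _

lemma stft_eq_inner (g f : L²) (x ω : ℝ) : STFT g f x ω = ⟪timeFreqShift g x ω, f⟫_ℂ := by
  rw [L2.inner_def, STFT]
  refine integral_congr_ae ?_
  filter_upwards [MemLp.coeFn_toLp (memLp_modulate_translate g x ω),
    Lp.coeFn_compMeasurePreserving g (measurePreserving_sub_right volume x)] with t hM hT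
  rw [RCLike.inner_apply, timeFreqShift, hM, Translate, hT, map_mul, ← exp_conj]
  simp only [Function.comp_apply, map_mul, map_ofNat, conj_ofReal, conj_I]
  ring_nf

lemma hasSum_stft {φ : ℤ → L²} {c : ℤ → ℂ} {f : L²} (g : L²) (hf : HasSum (fun k => c k • φ k) f)
    (x ω : ℝ) : HasSum (fun k => c k * STFT g (φ k) x ω) (STFT g f x ω) := by
  simpa [stft_eq_inner, inner_smul_right] using (innerSL ℂ (timeFreqShift g x ω)).hasSum hf

lemma translate_reflect_ae_eq (g : L²) (τ : ℝ) :
    Translate τ (Reflect g) =ᵐ[volume] fun t => g (τ - t) := by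
  have hR : (Reflect g : ℝ → ℂ) =ᵐ[volume] fun t => g (-t) :=
    Lp.coeFn_compMeasurePreserving _ _
  filter_upwards [Lp.coeFn_compMeasurePreserving (Reflect g) (measurePreserving_sub_right volume τ),
    (measurePreserving_sub_right volume τ).quasiMeasurePreserving.ae_eq_comp hR] with t hT hRτ
  rw [Translate, hT, hRτ]
  simp

lemma stft_translate_reflect_self (g : L²) (τ x ω : ℝ) :
    STFT g (Translate τ (Reflect g)) x ω =
      exp (-2 * π * I * ω * (τ + x)) * conj (STFT g (Translate τ (Reflect g)) x ω) := by
  set F : ℝ → ℂ := fun t => g (τ - t) * conj (g (t - x)) * exp (-2 * π * I * ω * t)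
  have hF : STFT g (Translate τ (Reflect g)) x ω = ∫ t, F t :=
    integral_congr_ae <| by
      filter_upwards [translate_reflect_ae_eq g τ] with t ht
      rw [ht]
  have hsubst : ∀ t, F (τ + x - t) = exp (-2 * π * I * ω * (τ + x)) * conj (F t) := by
    intro t
    simp only [F, map_mul, conj_conj, ← exp_conj, map_neg, map_ofNat, conj_ofReal, conj_I,
      show τ - (τ + x - t) = t - x by ring, show τ + x - t - x = τ - t by ring]
    rw [show -2 * π * I * ω * ((τ + x - t : ℝ) : ℂ) =
      -2 * π * I * ω * (τ + x) + -2 * π * -I * ω * t by push_cast; ring, Complex.exp_add]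
    ring
  rw [hF]
  calc ∫ t, F t = ∫ t, F (τ + x - t) := (integral_sub_left_eq_self F volume (τ + x)).symm
    _ = ∫ t, exp (-2 * π * I * ω * (τ + x)) * conj (F t) := by simp only [hsubst]
    _ = exp (-2 * π * I * ω * (τ + x)) * conj (∫ t, F t) := by
      rw [integral_const_mul, integral_conj]

lemma conj_stft_translate_reflect (g : L²) {τ ω : ℝ} (m : ℤ) (hm : ω * τ = m) (x : ℝ) :
    conj (STFT g (Translate τ (Reflect g)) x ω) =
      exp (2 * π * I * ω * x) * STFT g (Translate τ (Reflect g)) x ω := by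
  have hperiod : exp (2 * π * I * ω * τ) = 1 := by
    rw [← exp_int_mul_two_pi_mul_I m, ← ofReal_intCast, ← hm]
    push_cast
    ring_nf
  conv_lhs => rw [stft_translate_reflect_self]
  rw [map_mul, conj_conj, ← exp_conj, ← one_mul (exp (2 * π * I * ω * x)), ← hperiod,
    ← Complex.exp_add]
  congr 2
  simp only [map_mul, map_neg, map_add, map_ofNat, conj_ofReal, conj_I]
  ring

end STFT

/-- If `{T_{sk}(Rg) : k ∈ ℤ}` is a Bessel sequence and `c ∈ ℓ²(ℤ)`, then the series
`f = ∑ₖ cₖ T_{sk}(Rg)` and `f_× = ∑ₖ conj(cₖ) T_{sk}(Rg)` converge unconditionally in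
`L²(ℝ)` and the spectrograms of `f` and `f_×` agree pointwise on `ℝ × (1/s)ℤ`. -/
theorem stmt6 (g : Lp ℂ 2 (volume : Measure ℝ)) (s : ℝ) (hs : 0 < s)
    (hBessel : IsBessel fun k : ℤ => Translate (s * k) (Reflect g))
    (c : ℤ → ℂ) (hc : Summable fun k : ℤ => ‖c k‖ ^ 2) :
    ∃ f fₓ : Lp ℂ 2 (volume : Measure ℝ),
      HasSum (fun k : ℤ => c k • Translate (s * k) (Reflect g)) f ∧
      HasSum (fun k : ℤ => (starRingEnd ℂ) (c k) • Translate (s * k) (Reflect g)) fₓ ∧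
      ∀ x : ℝ, ∀ n : ℤ,
        ‖STFT g f x (n / s)‖ = ‖STFT g fₓ x (n / s)‖ := by
  obtain ⟨f, hf⟩ := summable_smul_of_bessel hBessel c hc
  obtain ⟨fₓ, hfₓ⟩ := summable_smul_of_bessel hBessel (fun k => conj (c k)) (by simpa using hc)
  refine ⟨f, fₓ, hf, hfₓ, fun x n => ?_⟩
  set phase := exp (2 * π * I * ↑(n / s : ℝ) * x)
  have hterm (k : ℤ) : conj (STFT g (Translate (s * k) (Reflect g)) x (n / s)) =
      phase * STFT g (Translate (s * k) (Reflect g)) x (n / s) :=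
    conj_stft_translate_reflect g (n * k) (by field_simp; push_cast; ring) x
  have hconj : conj (STFT g f x (n / s)) = phase * STFT g fₓ x (n / s) := by
    refine (hasSum_conj'.2 (hasSum_stft g hf x _)).unique ?_
    simpa only [map_mul, hterm, mul_left_comm] using (hasSum_stft g hfₓ x _).mul_left phase
  rw [← norm_conj, hconj, norm_mul, norm_exp_two_pi_I_mul_mul, one_mul]
end

section
/- Let g ∈ L²(ℝ) be a window function, let s > 0, and let c : ℤ → ℂ be a finitely supported sequence. Define f = Σ_{k∈ℤ} c_k M_{sk}(Rg) and f_× = Σ_{k∈ℤ} conj(c_k) M_{sk}(Rg) (finite sums in L²(ℝ)). Then |V_g f(n/s, ω)| = |V_g f_×(n/s, ω)| for every n ∈ ℤ and every ω ∈ ℝ; that is, the spectrograms of f and f_× agree pointwise on the vertical parallel lines (1/s)ℤ × ℝ. (This is the case θ = π/2 of the rotated parallel-lines theorem, since the fractional Fourier shift of order π/2 is the modulation operator and R_{π/2}(ℝ × (1/s)ℤ) = (1/s)ℤ × ℝ.) -/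
open MeasureTheory Complex Real

/-- Modulation operator `M_ν` on `L²(ℝ)`: `(M_ν f)(t) = e^{2πiνt} f(t)`. -/
noncomputable def Modulate (ν : ℝ) (f : Lp ℂ 2 (volume : Measure ℝ)) :
    Lp ℂ 2 (volume : Measure ℝ) :=
  MemLp.toLp (fun t : ℝ => Complex.exp (2 * Real.pi * Complex.I * ν * t) * f t) <| by
    refine MemLp.of_le (Lp.memLp f) ?_ ?_
    · exact (Complex.continuous_exp.comp (by continuity)).aestronglyMeasurable.mul
        (Lp.aestronglyMeasurable f)
    · refine Filter.Eventually.of_forall fun t => ?_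
      rw [norm_mul]
      have h1 : ‖Complex.exp (2 * Real.pi * Complex.I * (ν : ℂ) * (t : ℂ))‖ = 1 := by
        rw [Complex.norm_exp]
        norm_num [Complex.exp_re]
      rw [h1, one_mul]

/-! Substituting `t ↦ x - t` in the integral defining `V_g(M_a Rg)(x, ω)` gives the phase symmetry
`conj (V_g(M_a Rg)(x, ω)) = e^{2πi(ω - a)x} V_g(M_a Rg)(x, ω)`. For `a ∈ sℤ` and `x ∈ (1/s)ℤ` the
factor `e^{-2πiax}` is `1`, so the phase `e^{2πiωx}` is the same for every `k`. By linearity of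
`V_g`, `conj (V_g f(x, ω)) = e^{2πiωx} V_g f_×(x, ω)`, and taking absolute values gives the claim. -/

open scoped ComplexConjugate

local notation "L²" => Lp ℂ 2 (volume : Measure ℝ)

theorem coeFn_reflect (f : L²) : Reflect f =ᵐ[volume] fun t => f (-t) :=
  Lp.coeFn_compMeasurePreserving f _

theorem coeFn_modulate (ν : ℝ) (f : L²) :
    Modulate ν f =ᵐ[volume] fun t => exp (2 * π * I * ν * t) * f t :=
  MemLp.coeFn_toLp _

theorem integrable_mul_conj_comp_sub (f g : L²) (x : ℝ) :
    Integrable (fun t => f t * conj (g (t - x))) := by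
  have hx := measurePreserving_sub_right volume x
  refine (L2.integrable_inner (𝕜 := ℂ) (Lp.compMeasurePreserving _ hx g) f).congr ?_
  filter_upwards [Lp.coeFn_compMeasurePreserving g hx] with t ht
  rw [RCLike.inner_apply, ht, Function.comp_apply, mul_comm]

theorem integrable_stft_integrand (g f : L²) (x ω : ℝ) :
    Integrable (fun t : ℝ => f t * conj (g (t - x)) * exp (-2 * π * I * ω * t)) := by
  refine (integrable_mul_conj_comp_sub f g x).mul_bdd (c := 1) (by fun_prop)
    (Filter.Eventually.of_forall fun t => ?_)
  simp [norm_exp]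

theorem stft_add (g f h : L²) (x ω : ℝ) :
    STFT g (f + h) x ω = STFT g f x ω + STFT g h x ω := by
  rw [STFT, STFT, STFT, ← integral_add (integrable_stft_integrand g f x ω)
    (integrable_stft_integrand g h x ω)]
  refine integral_congr_ae ?_
  filter_upwards [Lp.coeFn_add f h] with t ht
  simp only [ht, Pi.add_apply]
  ring

theorem stft_smul (g f : L²) (c : ℂ) (x ω : ℝ) : STFT g (c • f) x ω = c * STFT g f x ω := by
  rw [STFT, STFT, ← integral_const_mul]
  refine integral_congr_ae ?_
  filter_upwards [Lp.coeFn_smul c f] with t ht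
  simp only [ht, Pi.smul_apply, smul_eq_mul]
  ring

noncomputable def stftₗ (g : L²) (x ω : ℝ) : L² →ₗ[ℂ] ℂ where
  toFun f := STFT g f x ω
  map_add' f h := stft_add g f h x ω
  map_smul' c f := stft_smul g f c x ω

theorem stft_sum_smul {ι : Type*} (g : L²) (x ω : ℝ) (S : Finset ι) (c : ι → ℂ) (F : ι → L²) :
    STFT g (∑ i ∈ S, c i • F i) x ω = ∑ i ∈ S, c i * STFT g (F i) x ω :=
  (map_sum (stftₗ g x ω) _ S).trans
    (Finset.sum_congr rfl fun i _ => (stftₗ g x ω).map_smul (c i) (F i))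

theorem stft_modulate_reflect (g : L²) (a x ω : ℝ) :
    STFT g (Modulate a (Reflect g)) x ω =
      ∫ t : ℝ, g (-t) * conj (g (t - x)) * exp (2 * π * I * (a - ω) * t) := by
  refine integral_congr_ae ?_
  filter_upwards [coeFn_modulate a (Reflect g), coeFn_reflect g] with t hM hR
  rw [hM, hR]
  have hexp : exp (2 * π * I * a * t) * exp (-2 * π * I * ω * t) =
      exp (2 * π * I * (a - ω) * t) := by
    rw [← Complex.exp_add]
    ring_nf
  rw [← hexp]
  ring

theorem conj_stft_modulate_reflect (g : L²) (a x ω : ℝ) :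
    conj (STFT g (Modulate a (Reflect g)) x ω) =
      exp (2 * π * I * (ω - a) * x) * STFT g (Modulate a (Reflect g)) x ω := by
  rw [stft_modulate_reflect, ← integral_conj, ← integral_const_mul,
    ← integral_sub_left_eq_self _ volume x]
  congr 1
  ext t
  simp only [map_mul, conj_conj, ← exp_conj, neg_sub, sub_sub_cancel_left, map_ofNat, map_sub,
    conj_ofReal, conj_I]
  have hexp : exp (2 * π * -I * (a - ω) * (x - t : ℝ)) =
      exp (2 * π * I * (ω - a) * x) * exp (2 * π * I * (a - ω) * t) := by
    rw [← Complex.exp_add]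
    push_cast
    ring_nf
  rw [hexp]
  ring

theorem conj_stft_modulate_reflect_of_mul_eq_int (g : L²) {a x : ℝ} (ω : ℝ) {m : ℤ}
    (h : a * x = m) :
    conj (STFT g (Modulate a (Reflect g)) x ω) =
      exp (2 * π * I * ω * x) * STFT g (Modulate a (Reflect g)) x ω := by
  rw [conj_stft_modulate_reflect]
  have hm : (a : ℂ) * x = m := by exact_mod_cast h
  have hexp : 2 * π * I * (ω - a) * x = 2 * π * I * ω * x + (-m : ℤ) * (2 * π * I) := by
    push_cast
    linear_combination (-2 * π * I) * hm
  rw [hexp, Complex.exp_add, exp_int_mul_two_pi_mul_I, mul_one]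

theorem norm_stft_sum_smul_eq_norm_stft_sum_conj_smul {ι : Type*} (g : L²) (x ω : ℝ)
    (S : Finset ι) (c : ι → ℂ) (F : ι → L²) (u : ℂ) (hu : ‖u‖ = 1)
    (hF : ∀ i ∈ S, conj (STFT g (F i) x ω) = u * STFT g (F i) x ω) :
    ‖STFT g (∑ i ∈ S, c i • F i) x ω‖ = ‖STFT g (∑ i ∈ S, conj (c i) • F i) x ω‖ := by
  have hconj : conj (∑ i ∈ S, c i * STFT g (F i) x ω) =
      u * ∑ i ∈ S, conj (c i) * STFT g (F i) x ω := by
    rw [map_sum, Finset.mul_sum]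
    refine Finset.sum_congr rfl fun i hi => ?_
    rw [map_mul, hF i hi]
    ring
  rw [stft_sum_smul, stft_sum_smul, ← norm_conj, hconj, norm_mul, hu, one_mul]

/-- If `f = ∑ₖ cₖ M_{sk}(Rg)` and `f_× = ∑ₖ conj(cₖ) M_{sk}(Rg)` for a finitely supported
sequence `c`, then the spectrograms of `f` and `f_×` with window `g` agree pointwise on the
vertical parallel lines `(1/s)ℤ × ℝ`. -/
theorem stmt7 (g : Lp ℂ 2 (volume : Measure ℝ)) (s : ℝ) (hs : 0 < s) (c : ℤ →₀ ℂ) :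
    ∀ n : ℤ, ∀ ω : ℝ,
      ‖STFT g (∑ k ∈ c.support, c k • Modulate (s * k) (Reflect g)) (n / s) ω‖ =
      ‖STFT g
        (∑ k ∈ c.support, (starRingEnd ℂ) (c k) • Modulate (s * k) (Reflect g)) (n / s) ω‖ := by
  intro n ω
  refine norm_stft_sum_smul_eq_norm_stft_sum_conj_smul g _ ω _ _ _ _ (by simp [norm_exp])
    fun k _ => conj_stft_modulate_reflect_of_mul_eq_int g ω (m := k * n) ?_
  push_cast
  field_simp
end

section
/- Let u ∈ L²(ℝ) with u ≠ 0, let s > 0, and let c : ℤ → ℂ be a finitely supported sequence belonging to ℓ²_O(ℤ), i.e. there exists no α ∈ ℝ such that c_k ∈ e^{iα}·ℝ for all k. Then the functions f = Σ_{k∈ℤ} c_k T_{sk} u and f_× = Σ_{k∈ℤ} conj(c_k) T_{sk} u do not agree up to a global phase: there is no ν ∈ ℂ with |ν| = 1 and f = ν·f_×. -/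
open MeasureTheory Complex Real

/-- The values of the sequence `c : ℤ → ℂ` do not all lie on a single line through the
origin of the complex plane (the defining property of `ℓ²_𝒪(ℤ)`). -/
def NotOnLine (c : ℤ → ℂ) : Prop :=
  ¬ ∃ α : ℝ, ∀ k : ℤ, ∃ r : ℝ, c k = Complex.exp (α * Complex.I) * r

/-!
If `f = ν f_×`, then `∑ₖ (cₖ - ν conj cₖ) T_{sk} u = 0`. The translates `T_{sk} u`, `k ∈ ℤ`, are
linearly independent: a nontrivial relation, shifted to nonnegative indices, reads `p(T_s) u = 0`
for a nonzero polynomial `p`, and factoring `p` over `ℂ` produces an eigenvector of `T_s`. But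
`T_s w = μ w` makes `|w|²` an integrable `s`-periodic function, hence `w = 0`. So `cₖ = ν conj cₖ`
for every `k`, which puts all `cₖ` on the line `e^{i arg ν / 2} ℝ`.
-/

open Filter Topology Polynomial

lemma intervalIntegral_add_eq_of_ae_periodic {q : ℝ → ℝ} {s : ℝ}
    (hper : ∀ᵐ t, q (t + s) = q t) (n : ℕ) (a b : ℝ) :
    ∫ t in a..b, q t = ∫ t in (a + n * s)..(b + n * s), q t := by
  induction n generalizing a b with
  | zero => simp
  | succ n ih =>
    have hshift : ∫ t in a..b, q t = ∫ t in (a + s)..(b + s), q t := by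
      rw [← intervalIntegral.integral_comp_add_right]
      refine intervalIntegral.integral_congr_ae ?_
      filter_upwards [hper] with t ht _ using ht.symm
    rw [hshift, ih]
    push_cast
    ring_nf

lemma intervalIntegral_neg_mul_mul_of_ae_periodic {q : ℝ → ℝ} {s : ℝ} (hq : Integrable q)
    (hper : ∀ᵐ t, q (t + s) = q t) (n : ℕ) :
    ∫ t in -(n * s)..(n * s), q t = 2 * n * ∫ t in 0..s, q t := by
  have hpos : ∀ n : ℕ, ∫ t in 0..(n * s), q t = n * ∫ t in 0..s, q t := by
    intro n
    induction n with
    | zero => simp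
    | succ n ih =>
      rw [← intervalIntegral.integral_add_adjacent_intervals (b := n * s)
        hq.intervalIntegrable hq.intervalIntegrable, ih,
        intervalIntegral_add_eq_of_ae_periodic hper n 0 s]
      push_cast
      ring_nf
  rw [← intervalIntegral.integral_add_adjacent_intervals (b := 0)
    hq.intervalIntegrable hq.intervalIntegrable,
    intervalIntegral_add_eq_of_ae_periodic hper n, hpos]
  simp only [neg_add_cancel, zero_add, hpos]
  ring

lemma ae_eq_zero_of_integrable_of_ae_periodic {q : ℝ → ℝ} {s : ℝ} (hs : 0 < s) (hq0 : 0 ≤ q)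
    (hq : Integrable q) (hper : ∀ᵐ t, q (t + s) = q t) : q =ᵐ[volume] 0 := by
  have hlim : Tendsto (fun n : ℕ => 2 * n * ∫ t in 0..s, q t) atTop (𝓝 (∫ t, q t)) := by
    simp_rw [← intervalIntegral_neg_mul_mul_of_ae_periodic hq hper]
    have h := tendsto_natCast_atTop_atTop.atTop_mul_const hs
    exact intervalIntegral_tendsto_integral hq (tendsto_neg_atTop_atBot.comp h) h
  have hperiod : ∫ t in 0..s, q t = 0 := by
    refine (intervalIntegral.integral_nonneg hs.le fun t _ => hq0 t).eq_of_not_lt' fun hpos => ?_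
    refine not_tendsto_atTop_of_tendsto_nhds hlim ?_
    exact (tendsto_natCast_atTop_atTop.const_mul_atTop two_pos).atTop_mul_const hpos
  have hint : ∫ t, q t = 0 := by
    simp only [hperiod, mul_zero] at hlim
    exact tendsto_nhds_unique hlim tendsto_const_nhds
  exact (integral_eq_zero_iff_of_nonneg hq0 hq).mp hint

namespace Module.End

variable {K M : Type*} [Field K] [AddCommGroup M] [Module K M] {f : End K M}

lemma exists_hasEigenvalue_of_aeval_prod_X_sub_C_apply_eq_zero (s : Multiset K) {x : M}
    (hx : x ≠ 0) (h : aeval f (s.map fun r => X - C r).prod x = 0) : ∃ μ, f.HasEigenvalue μ := by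
  induction s using Multiset.induction_on generalizing x with
  | empty => simp [hx] at h
  | cons r s ih =>
    by_cases hy : aeval f (s.map fun r => X - C r).prod x = 0
    · exact ih hx hy
    · refine ⟨r, hasEigenvalue_of_hasEigenvector ⟨mem_eigenspace_iff.mpr ?_, hy⟩⟩
      rw [Multiset.map_cons, Multiset.prod_cons, aeval_mul, mul_apply, map_sub, aeval_X,
        aeval_C, LinearMap.sub_apply, algebraMap_end_apply, sub_eq_zero] at h
      exact h

lemma exists_hasEigenvalue_of_aeval_apply_eq_zero [IsAlgClosed K] {p : K[X]} (hp : p ≠ 0)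
    {x : M} (hx : x ≠ 0) (h : aeval f p x = 0) : ∃ μ, f.HasEigenvalue μ := by
  refine exists_hasEigenvalue_of_aeval_prod_X_sub_C_apply_eq_zero p.roots hx ?_
  rw [← C_leadingCoeff_mul_prod_multiset_X_sub_C (IsAlgClosed.card_roots_eq_natDegree (p := p)),
    aeval_mul, mul_apply, aeval_C, algebraMap_end_apply] at h
  exact (smul_eq_zero.mp h).resolve_left (leadingCoeff_ne_zero.mpr hp)

lemma linearIndependent_pow_apply [IsAlgClosed K] (hf : ∀ μ, ¬ f.HasEigenvalue μ) {x : M}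
    (hx : x ≠ 0) : LinearIndependent K fun n : ℕ => (f ^ n) x :=
  (linearIndependent_powers_iff_aeval f x).mpr fun _ h => by_contra fun hp =>
    (exists_hasEigenvalue_of_aeval_apply_eq_zero hp hx h).elim hf

end Module.End

namespace MeasureTheory.Lp

noncomputable def translateₗ (τ : ℝ) :
    Lp ℂ 2 (volume : Measure ℝ) →ₗ[ℂ] Lp ℂ 2 (volume : Measure ℝ) :=
  Lp.compMeasurePreservingₗ ℂ (fun t => t - τ) (measurePreserving_sub_right volume τ)

lemma translateₗ_apply (τ : ℝ) (f : Lp ℂ 2 (volume : Measure ℝ)) :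
    translateₗ τ f = Translate τ f := rfl

lemma norm_translate (τ : ℝ) (f : Lp ℂ 2 (volume : Measure ℝ)) : ‖Translate τ f‖ = ‖f‖ :=
  Lp.norm_compMeasurePreserving f _

lemma coeFn_translate (τ : ℝ) (f : Lp ℂ 2 (volume : Measure ℝ)) :
    Translate τ f =ᵐ[volume] fun t => f (t - τ) :=
  Lp.coeFn_compMeasurePreserving f _

lemma translate_translate (a b : ℝ) (f : Lp ℂ 2 (volume : Measure ℝ)) :
    Translate a (Translate b f) = Translate (a + b) f := by
  have hcomp : (fun t => Translate b f (t - a)) =ᵐ[volume] fun t => f (t - a - b) :=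
    (measurePreserving_sub_right volume a).quasiMeasurePreserving.ae_eq_comp (coeFn_translate b f)
  refine Lp.ext ?_
  filter_upwards [coeFn_translate a (Translate b f), hcomp, coeFn_translate (a + b) f]
    with t h₁ h₂ h₃
  rw [h₁, h₂, h₃, sub_sub]

lemma translate_zero (f : Lp ℂ 2 (volume : Measure ℝ)) : Translate 0 f = f := by
  refine Lp.ext ?_
  filter_upwards [coeFn_translate 0 f] with t ht
  rw [ht, sub_zero]

lemma translateₗ_pow_apply (s : ℝ) (n : ℕ) (f : Lp ℂ 2 (volume : Measure ℝ)) :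
    (translateₗ s ^ n) f = Translate (s * n) f := by
  induction n with
  | zero => simp [translate_zero]
  | succ n ih =>
    rw [pow_succ', Module.End.mul_apply, ih, translateₗ_apply, translate_translate]
    push_cast
    ring_nf

lemma eq_zero_of_translate_eq_smul {s : ℝ} (hs : s ≠ 0) {w : Lp ℂ 2 (volume : Measure ℝ)}
    {μ : ℂ} (h : Translate s w = μ • w) : w = 0 := by
  by_contra hw
  have hμ : ‖μ‖ = 1 := by
    have := norm_translate s w
    rwa [h, norm_smul, mul_eq_right₀ (norm_ne_zero_iff.mpr hw)] at this
  set q : ℝ → ℝ := fun t => ‖w t‖ ^ 2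
  have hback : ∀ᵐ t, q (t - s) = q t := by
    filter_upwards [coeFn_translate s w, h ▸ Lp.coeFn_smul μ w] with t h₁ h₂
    simp only [q, ← h₁, h₂, Pi.smul_apply, smul_eq_mul, norm_mul, hμ, one_mul]
  have hfwd : ∀ᵐ t, q (t + s) = q t := by
    filter_upwards [(measurePreserving_add_right volume s).quasiMeasurePreserving.ae hback]
      with t ht
    rw [← ht, add_sub_cancel_right]
  have hq : Integrable q := (Lp.memLp w).integrable_norm_pow two_ne_zero
  have hq0 : q =ᵐ[volume] 0 := by
    rcases hs.lt_or_gt with hneg | hpos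
    · exact ae_eq_zero_of_integrable_of_ae_periodic (neg_pos.mpr hneg) (fun t => sq_nonneg _) hq
        (by simpa only [← sub_eq_add_neg] using hback)
    · exact ae_eq_zero_of_integrable_of_ae_periodic hpos (fun t => sq_nonneg _) hq hfwd
  refine hw (Lp.ext ?_)
  filter_upwards [hq0, Lp.coeFn_zero ℂ 2 (volume : Measure ℝ)] with t h₁ h₂
  simpa [q, h₂] using h₁

lemma not_hasEigenvalue_translateₗ {s : ℝ} (hs : s ≠ 0) (μ : ℂ) :
    ¬ Module.End.HasEigenvalue (translateₗ s) μ := fun h =>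
  let ⟨_, hw⟩ := h.exists_hasEigenvector
  hw.2 (eq_zero_of_translate_eq_smul hs hw.apply_eq_smul)

lemma ker_translateₗ (τ : ℝ) : LinearMap.ker (translateₗ τ) = ⊥ :=
  LinearMap.ker_eq_bot'.mpr fun f hf => by
    rwa [← norm_eq_zero, ← norm_translate τ, ← translateₗ_apply, norm_eq_zero]

lemma linearIndependent_translate {s : ℝ} (hs : s ≠ 0) {u : Lp ℂ 2 (volume : Measure ℝ)}
    (hu : u ≠ 0) : LinearIndependent ℂ fun k : ℤ => Translate (s * k) u := by
  have hnat : LinearIndependent ℂ fun n : ℕ => Translate (s * n) u := by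
    simpa only [translateₗ_pow_apply] using
      Module.End.linearIndependent_pow_apply (not_hasEigenvalue_translateₗ hs) hu
  refine linearIndependent_iff_finset_linearIndependent.mpr fun S => ?_
  obtain ⟨m, hm⟩ := S.bddBelow
  have hinj : Function.Injective fun k : S => (k - m).toNat := by
    intro k l hkl
    have := hm k.2
    have := hm l.2
    ext
    simp only at hkl
    omega
  have hshift : (fun k : ℤ => Translate (s * k) u) ∘ Subtype.val =
      translateₗ (s * m) ∘ (fun n : ℕ => Translate (s * n) u) ∘ fun k : S => (k - m).toNat := by
    funext k
    simp only [Function.comp_apply, translateₗ_apply, translate_translate]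
    rw [← Int.cast_natCast, Int.toNat_of_nonneg (sub_nonneg.mpr (hm k.2))]
    push_cast
    ring_nf
  rw [hshift]
  exact (hnat.comp _ hinj).map' _ (ker_translateₗ _)

end MeasureTheory.Lp

open ComplexConjugate

lemma Complex.exists_eq_exp_mul_ofReal_of_eq_mul_conj {ν z : ℂ} (hν : ‖ν‖ = 1)
    (h : z = ν * conj z) : ∃ r : ℝ, z = exp (↑(ν.arg / 2) * I) * r := by
  set ω := exp (↑(ν.arg / 2) * I)
  have hω : ω * ω = ν := by
    rw [← exp_add, ← add_mul, ← ofReal_add, add_halves]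
    simpa [hν] using norm_mul_exp_arg_mul_I ν
  have hω0 : ω ≠ 0 := exp_ne_zero _
  have hconj : conj ω = ω⁻¹ := by
    rw [← exp_conj, ← exp_neg, map_mul, conj_ofReal, conj_I, mul_neg]
  have hreal : conj (ω⁻¹ * z) = ω⁻¹ * z := by
    rw [map_mul, map_inv₀, hconj, inv_inv]
    nth_rewrite 2 [h]
    rw [← hω]
    field_simp
  exact ⟨(ω⁻¹ * z).re, by rw [conj_eq_iff_re.mp hreal, mul_inv_cancel_left₀ hω0]⟩

/-- If `u ≠ 0`, `s > 0` and `c` is a finitely supported sequence whose values do not all lie on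
a line through the origin, then `f = ∑ₖ cₖ T_{sk} u` and `f_× = ∑ₖ conj(cₖ) T_{sk} u` do not
agree up to a global phase. -/
theorem stmt8 (u : Lp ℂ 2 (volume : Measure ℝ)) (hu : u ≠ 0) (s : ℝ) (hs : 0 < s)
    (c : ℤ →₀ ℂ) (hc : NotOnLine fun k => c k) :
    ¬ SamePhase (∑ k ∈ c.support, c k • Translate (s * k) u)
      (∑ k ∈ c.support, (starRingEnd ℂ) (c k) • Translate (s * k) u) := by
  rintro ⟨ν, hν, heq⟩
  have hrel : ∑ k ∈ c.support, (c k - ν * conj (c k)) • Translate (s * k) u = 0 := by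
    simp only [sub_smul, mul_smul, Finset.sum_sub_distrib, ← Finset.smul_sum, heq, sub_self]
  have hcoef : ∀ k, c k = ν * conj (c k) := by
    intro k
    by_cases hk : k ∈ c.support
    · exact sub_eq_zero.mp <|
        linearIndependent_iff'.mp (Lp.linearIndependent_translate hs.ne' hu) _ _ hrel k hk
    · simp [Finsupp.notMem_support_iff.mp hk]
  exact hc ⟨ν.arg / 2, fun k => exists_eq_exp_mul_ofReal_of_eq_mul_conj hν (hcoef k)⟩
end

section
/- Let g ∈ L²(ℝ) with g ≠ 0, let s > 0, and let c : ℤ → ℂ be any finitely supported sequence belonging to ℓ²_O(ℤ). Then the functions f₁ = Σ_{k∈ℤ} c_k T_{sk}(Rg) and f₂ = Σ_{k∈ℤ} conj(c_k) T_{sk}(Rg) satisfy |V_g f₁(x, n/s)| = |V_g f₂(x, n/s)| for all x ∈ ℝ and n ∈ ℤ (pointwise equal spectrograms on the parallel lines ℝ × (1/s)ℤ), yet f₁ and f₂ do not agree up to a global phase. -/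
open MeasureTheory Complex Real

/-!
Spectrograms: the substitution `t ↦ a + x - t` gives
`conj (V_g (T_a R g) (x, ω)) = e^{2πiω(a+x)} V_g (T_a R g) (x, ω)`. For `a ∈ sℤ` and `ω ∈ s⁻¹ℤ`
the phase `e^{2πiωa}` is `1`, so `conj (V_g f₂) = e^{2πiωx} V_g f₁` on the lines `ℝ × s⁻¹ℤ`.

Phase: the lattice translates `T_{sk} h` of any `h ≠ 0` are linearly independent, because `T_s`
has no eigenvalue on `L²(ℝ)` (an eigenfunction `v` would have an `s`-periodic integrable `|v|²`)
and an operator without eigenvalues over `ℂ` is not annihilated on a nonzero vector by any nonzero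
polynomial. Hence `f₁ = ν f₂` forces `c_k = ν conj c_k` for every `k`, which puts all `c_k` on the
line `e^{i arg ν / 2} ℝ`.
-/

open Polynomial ComplexConjugate

namespace Module.End

theorem injective_sub_algebraMap_of_not_hasEigenvalue {R M : Type*} [CommRing R]
    [AddCommGroup M] [Module R M] {f : End R M} {μ : R} (hμ : ¬ f.HasEigenvalue μ) :
    Function.Injective (f - algebraMap R (End R M) μ) := by
  rw [← LinearMap.ker_eq_bot, Module.algebraMap_end_eq_smul_id, ← one_eq_id, ← eigenspace_def]
  exact not_ne_iff.mp hμ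

variable {K V : Type*} [Field K] [IsAlgClosed K] [AddCommGroup V] [Module K V]

theorem injective_aeval_of_forall_not_hasEigenvalue {f : End K V}
    (hf : ∀ μ, ¬ f.HasEigenvalue μ) {p : K[X]} (hp : p ≠ 0) :
    Function.Injective (aeval f p) := by
  induction h : p.natDegree generalizing p with
  | zero =>
    obtain ⟨a, rfl⟩ := natDegree_eq_zero.mp h
    have ha : a ≠ 0 := by rintro rfl; exact hp C_0
    rw [aeval_C, Module.algebraMap_end_eq_smul_id]
    exact smul_right_injective V ha
  | succ n ih =>
    obtain ⟨z, hz⟩ := IsAlgClosed.exists_root p (by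
      rw [degree_eq_natDegree hp, h]; exact_mod_cast n.succ_ne_zero)
    obtain ⟨q, rfl⟩ := dvd_iff_isRoot.mpr hz
    have hq : q ≠ 0 := right_ne_zero_of_mul hp
    have hdeg : q.natDegree = n := by
      rw [natDegree_mul (X_sub_C_ne_zero z) hq, natDegree_X_sub_C] at h
      omega
    rw [map_mul, map_sub, aeval_X, aeval_C, Module.End.coe_mul]
    exact (injective_sub_algebraMap_of_not_hasEigenvalue (hf z)).comp (ih hq hdeg)

theorem linearIndependent_pow_apply_of_forall_not_hasEigenvalue {f : End K V}
    (hf : ∀ μ, ¬ f.HasEigenvalue μ) {v : V} (hv : v ≠ 0) :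
    LinearIndependent K fun n : ℕ => (f ^ n) v := by
  refine (linearIndependent_powers_iff_aeval f v).mpr fun p hp => ?_
  by_contra hp0
  exact hv (injective_aeval_of_forall_not_hasEigenvalue hf hp0 (hp.trans (map_zero _).symm))

end Module.End

theorem linearIndependent_int_of_forall_shift {R M : Type*} [Ring R] [AddCommGroup M] [Module R M]
    {v : ℤ → M} (h : ∀ N : ℕ, LinearIndependent R fun n : ℕ => v (n - N)) :
    LinearIndependent R v := by
  have hcover : (⋃ N : ℕ, Set.range fun n : ℕ => (n : ℤ) - N) = Set.univ := by
    refine Set.eq_univ_of_forall fun k => Set.mem_iUnion.mpr ⟨k.natAbs, (k + k.natAbs).toNat, ?_⟩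
    simp only
    omega
  have hdir : Directed (· ⊆ ·) fun N : ℕ => Set.range fun n : ℕ => (n : ℤ) - N := by
    refine Monotone.directed_le fun N M hNM => ?_
    rintro _ ⟨n, rfl⟩
    exact ⟨n + (M - N), by push_cast [hNM]; ring⟩
  rw [← linearIndepOn_univ_iff, ← hcover]
  refine linearIndepOn_iUnion_of_directed hdir fun N => ?_
  exact (linearIndepOn_range_iff (fun a b hab => by simpa using hab) v).mpr (h N)

theorem LinearIndependent.coeff_eq_smul_of_sum_eq_smul_sum {ι R M : Type*} [Ring R]
    [AddCommGroup M] [Module R M] {u : ι → M} (hu : LinearIndependent R u) {K : Finset ι}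
    {a b : ι → R} {ν : R} (h : ∑ k ∈ K, a k • u k = ν • ∑ k ∈ K, b k • u k) :
    ∀ k ∈ K, a k = ν * b k := by
  intro k hk
  refine sub_eq_zero.mp (linearIndependent_iff'.mp hu K (fun k => a k - ν * b k) ?_ k hk)
  simp only [sub_smul, mul_smul, Finset.sum_sub_distrib, ← Finset.smul_sum, h, sub_self]

theorem exists_line_of_forall_eq_mul_conj {ι : Type*} {c : ι → ℂ} {ν : ℂ} (hν : ‖ν‖ = 1)
    (h : ∀ k, c k = ν * conj (c k)) : ∃ α : ℝ, ∀ k, ∃ r : ℝ, c k = exp (α * I) * r := by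
  set α : ℝ := ν.arg / 2
  have hν' : ν = exp (α * I) * exp (α * I) := by
    rw [← Complex.exp_add, ← norm_mul_exp_arg_mul_I ν, hν, ofReal_one, one_mul]
    congr 1
    push_cast [α]
    ring
  refine ⟨α, fun k => ⟨(exp (-α * I) * c k).re, ?_⟩⟩
  have hreal : conj (exp (-α * I) * c k) = exp (-α * I) * c k := by
    calc conj (exp (-α * I) * c k) = exp (α * I) * conj (c k) := by
          rw [map_mul, ← exp_conj]
          simp
      _ = exp (-α * I) * (ν * conj (c k)) := by
          rw [hν', ← mul_assoc, ← mul_assoc, ← Complex.exp_add, neg_mul, neg_add_cancel,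
            Complex.exp_zero, one_mul]
      _ = exp (-α * I) * c k := by rw [← h k]
  rw [conj_eq_iff_re.mp hreal, ← mul_assoc, ← Complex.exp_add, neg_mul, add_neg_cancel,
    Complex.exp_zero, one_mul]

theorem norm_map_sum_conj_smul {ι V : Type*} [AddCommGroup V] [Module ℂ V] (L : V →ₗ[ℂ] ℂ)
    (u : ι → V) (K : Finset ι) (d : ι → ℂ) {E : ℂ} (hE : ‖E‖ = 1)
    (hu : ∀ k ∈ K, conj (L (u k)) = E * L (u k)) :
    ‖L (∑ k ∈ K, conj (d k) • u k)‖ = ‖L (∑ k ∈ K, d k • u k)‖ := by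
  have hconj : conj (L (∑ k ∈ K, conj (d k) • u k)) = E * L (∑ k ∈ K, d k • u k) := by
    simp only [map_sum, map_smul, smul_eq_mul, map_mul, conj_conj, Finset.mul_sum]
    exact Finset.sum_congr rfl fun k hk => by rw [hu k hk]; ring
  rw [← norm_conj, hconj, norm_mul, hE, one_mul]

def aePeriods {β : Type*} (φ : ℝ → β) : AddSubgroup ℝ where
  carrier := {a | (fun x => φ (x + a)) =ᵐ[volume] φ}
  zero_mem' := by simp
  add_mem' {a b} (ha : (fun x => φ (x + a)) =ᵐ[volume] φ)
      (hb : (fun x => φ (x + b)) =ᵐ[volume] φ) := by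
    show (fun x => φ (x + (a + b))) =ᵐ[volume] φ
    have hb' := (measurePreserving_add_right volume a).quasiMeasurePreserving.ae_eq_comp hb
    filter_upwards [hb', ha] with x hab ha
    simp only [Function.comp_apply] at hab
    rw [← add_assoc, hab, ha]
  neg_mem' {a} (ha : (fun x => φ (x + a)) =ᵐ[volume] φ) := by
    show (fun x => φ (x + -a)) =ᵐ[volume] φ
    have ha' := (measurePreserving_add_right volume (-a)).quasiMeasurePreserving.ae_eq_comp ha
    filter_upwards [ha'] with x hx
    simpa using hx.symm

theorem lintegral_eq_zero_of_mem_aePeriods {φ : ℝ → ENNReal} {s : ℝ} (hs : 0 < s)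
    (hφ : s ∈ aePeriods φ) (hfin : ∫⁻ x, φ x ≠ ⊤) : ∫⁻ x, φ x = 0 := by
  have hperiod : ∀ g : AddSubgroup.zmultiples s,
      ∫⁻ x in Set.Ioc 0 (0 + s), φ (g +ᵥ x) = ∫⁻ x in Set.Ioc 0 (0 + s), φ x := by
    rintro ⟨g, hg⟩
    have hg' : g ∈ aePeriods φ := (AddSubgroup.zmultiples_le.mpr hφ) hg
    refine lintegral_congr_ae (ae_restrict_of_ae ?_)
    filter_upwards [hg'] with x hx
    rw [← hx, AddSubgroup.vadd_def, vadd_eq_add, add_comm]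
  have hsum := (isAddFundamentalDomain_Ioc hs 0).lintegral_eq_tsum'' φ
  simp only [hperiod] at hsum
  have : Infinite (AddSubgroup.zmultiples s) :=
    Infinite.of_injective (fun n : ℤ => ⟨n • s, n, rfl⟩) fun m n hmn =>
      (zsmul_left_strictMono hs).injective (congrArg Subtype.val hmn)
  rw [hsum] at hfin ⊢
  have hcell : ∫⁻ x in Set.Ioc 0 (0 + s), φ x = 0 := by
    by_contra hcell
    exact hfin (ENNReal.tsum_const_eq_top_of_ne_zero hcell)
  rw [hcell, tsum_zero]

noncomputable def translateₗ (τ : ℝ) : Module.End ℂ (Lp ℂ 2 (volume : Measure ℝ)) :=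
  Lp.compMeasurePreservingₗ ℂ (fun t => t - τ) (measurePreserving_sub_right volume τ)

theorem translateₗ_apply (τ : ℝ) (f : Lp ℂ 2 (volume : Measure ℝ)) :
    translateₗ τ f = Translate τ f :=
  rfl

theorem coeFn_Translate (τ : ℝ) (f : Lp ℂ 2 (volume : Measure ℝ)) :
    ⇑(Translate τ f) =ᵐ[volume] fun t => f (t - τ) :=
  Lp.coeFn_compMeasurePreserving f _

theorem coeFn_Reflect (f : Lp ℂ 2 (volume : Measure ℝ)) :
    ⇑(Reflect f) =ᵐ[volume] fun t => f (-t) :=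
  Lp.coeFn_compMeasurePreserving f _

@[simp]
theorem norm_Translate (τ : ℝ) (f : Lp ℂ 2 (volume : Measure ℝ)) : ‖Translate τ f‖ = ‖f‖ :=
  Lp.norm_compMeasurePreserving f _

@[simp]
theorem norm_Reflect (f : Lp ℂ 2 (volume : Measure ℝ)) : ‖Reflect f‖ = ‖f‖ :=
  Lp.norm_compMeasurePreserving f _

theorem Translate_Translate (σ τ : ℝ) (f : Lp ℂ 2 (volume : Measure ℝ)) :
    Translate σ (Translate τ f) = Translate (σ + τ) f := by
  refine Lp.ext_iff.mpr ((coeFn_Translate σ _).trans ?_)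
  have hτ := (measurePreserving_sub_right volume σ).quasiMeasurePreserving.ae_eq_comp
    (coeFn_Translate τ f)
  filter_upwards [hτ, coeFn_Translate (σ + τ) f] with t ht hστ
  simp only [Function.comp_apply] at ht
  rw [hστ, ht, sub_sub]

theorem Translate_zero (f : Lp ℂ 2 (volume : Measure ℝ)) : Translate 0 f = f := by
  refine Lp.ext_iff.mpr ((coeFn_Translate 0 f).trans ?_)
  simp

theorem translateₗ_pow_apply (s : ℝ) (n : ℕ) (f : Lp ℂ 2 (volume : Measure ℝ)) :
    (translateₗ s ^ n) f = Translate (s * n) f := by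
  induction n with
  | zero => simp [Translate_zero]
  | succ n ih =>
    rw [pow_succ', Module.End.mul_apply, ih, translateₗ_apply, Translate_Translate]
    push_cast
    ring_nf

theorem not_hasEigenvalue_translateₗ {s : ℝ} (hs : 0 < s) (z : ℂ) :
    ¬ (translateₗ s).HasEigenvalue z := by
  intro hz
  obtain ⟨v, hv, hv0⟩ := hz.exists_hasEigenvector
  rw [Module.End.mem_eigenspace_iff, translateₗ_apply] at hv
  have hz1 : ‖z‖ = 1 := by
    have h := norm_Translate s v
    rw [hv, norm_smul] at h
    exact (mul_eq_right₀ (norm_ne_zero_iff.mpr hv0)).mp h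
  set φ : ℝ → ENNReal := fun t => ‖v t‖ₑ ^ (2 : ENNReal).toReal
  have hperiod : -s ∈ aePeriods φ := by
    show (fun x => φ (x + -s)) =ᵐ[volume] φ
    have h := coeFn_Translate s v
    rw [hv] at h
    filter_upwards [h, Lp.coeFn_smul z v] with t ht hzt
    simp only [φ, ← sub_eq_add_neg, ← ht, hzt, Pi.smul_apply, smul_eq_mul, enorm_mul]
    simp [← ofReal_norm, hz1]
  have hfin := lintegral_rpow_enorm_lt_top_of_eLpNorm_lt_top two_ne_zero ENNReal.ofNat_ne_top
    (Lp.eLpNorm_lt_top v)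
  have hzero := lintegral_eq_zero_of_mem_aePeriods hs (neg_neg s ▸ neg_mem hperiod) hfin.ne
  rw [lintegral_eq_zero_iff' ((Lp.aestronglyMeasurable v).enorm.pow_const _)] at hzero
  refine hv0 (Lp.eq_zero_iff_ae_eq_zero.mpr ?_)
  filter_upwards [hzero] with t ht
  simpa [φ] using ht

theorem linearIndependent_Translate {s : ℝ} (hs : 0 < s) {h : Lp ℂ 2 (volume : Measure ℝ)}
    (hh : h ≠ 0) : LinearIndependent ℂ fun k : ℤ => Translate (s * k) h := by
  refine linearIndependent_int_of_forall_shift fun N => ?_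
  have hN : Translate (-(s * N)) h ≠ 0 := by
    rwa [← norm_ne_zero_iff, norm_Translate, norm_ne_zero_iff]
  have hshift : (fun n : ℕ => Translate (s * ↑((n : ℤ) - N)) h) =
      fun n => (translateₗ s ^ n) (Translate (-(s * N)) h) := by
    funext n
    rw [translateₗ_pow_apply, Translate_Translate]
    push_cast
    ring_nf
  rw [hshift]
  exact Module.End.linearIndependent_pow_apply_of_forall_not_hasEigenvalue
    (not_hasEigenvalue_translateₗ hs) hN

theorem integrable_STFT_integrand (g f : Lp ℂ 2 (volume : Measure ℝ)) (x ω : ℝ) :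
    Integrable fun t : ℝ => f t * conj (g (t - x)) * exp (-2 * π * I * ω * t) := by
  have hinner : Integrable fun t : ℝ => f t * conj (g (t - x)) := by
    refine (L2.integrable_inner (𝕜 := ℂ) (Translate x g) f).congr ?_
    filter_upwards [coeFn_Translate x g] with t ht
    rw [RCLike.inner_apply, ht, mul_comm]
  refine hinner.mul_bdd (c := 1) (by fun_prop) (Filter.Eventually.of_forall fun t => ?_)
  rw [norm_exp]
  simp

noncomputable def STFTₗ (g : Lp ℂ 2 (volume : Measure ℝ)) (x ω : ℝ) :
    Lp ℂ 2 (volume : Measure ℝ) →ₗ[ℂ] ℂ where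
  toFun f := STFT g f x ω
  map_add' f h := by
    rw [STFT, STFT, STFT, ← integral_add (integrable_STFT_integrand g f x ω)
      (integrable_STFT_integrand g h x ω)]
    refine integral_congr_ae ?_
    filter_upwards [Lp.coeFn_add f h] with t ht
    rw [ht, Pi.add_apply]
    ring
  map_smul' c f := by
    rw [STFT, STFT, RingHom.id_apply, smul_eq_mul, ← integral_const_mul]
    refine integral_congr_ae ?_
    filter_upwards [Lp.coeFn_smul c f] with t ht
    rw [ht, Pi.smul_apply, smul_eq_mul]
    ring

theorem STFTₗ_apply (g f : Lp ℂ 2 (volume : Measure ℝ)) (x ω : ℝ) :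
    STFTₗ g x ω f = STFT g f x ω :=
  rfl

theorem coeFn_Translate_Reflect (a : ℝ) (g : Lp ℂ 2 (volume : Measure ℝ)) :
    ⇑(Translate a (Reflect g)) =ᵐ[volume] fun t => g (a - t) := by
  have hR := (measurePreserving_sub_right volume a).quasiMeasurePreserving.ae_eq_comp
    (coeFn_Reflect g)
  filter_upwards [coeFn_Translate a (Reflect g), hR] with t ht hRt
  simp only [Function.comp_apply, neg_sub] at hRt
  rw [ht, hRt]

theorem conj_STFT_Translate_Reflect (g : Lp ℂ 2 (volume : Measure ℝ)) (a x ω : ℝ) :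
    conj (STFT g (Translate a (Reflect g)) x ω) =
      exp (2 * π * I * ω * (a + x)) * STFT g (Translate a (Reflect g)) x ω := by
  set F : ℝ → ℂ := fun t => g (a - t) * conj (g (t - x)) * exp (-2 * π * I * ω * t)
  have hF : STFT g (Translate a (Reflect g)) x ω = ∫ t, F t := by
    refine integral_congr_ae ?_
    filter_upwards [coeFn_Translate_Reflect a g] with t ht
    rw [ht]
  have hsymm : ∀ t : ℝ, conj (F (a + x - t)) = exp (2 * π * I * ω * (a + x)) * F t := by
    intro t
    simp only [F, map_mul, conj_conj, ← exp_conj, map_neg, map_ofNat, conj_ofReal, conj_I]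
    rw [show a - (a + x - t) = t - x by ring, show a + x - t - x = a - t by ring]
    have hexp : -2 * π * -I * ω * ((a + x - t : ℝ) : ℂ) =
        2 * π * I * ω * (a + x) + -2 * π * I * ω * t := by
      push_cast
      ring
    rw [hexp, Complex.exp_add]
    ring
  rw [hF, ← integral_conj, ← integral_sub_left_eq_self _ volume (a + x), ← integral_const_mul]
  exact integral_congr_ae (Filter.Eventually.of_forall hsymm)

theorem norm_STFT_sum_conj_smul_Translate_Reflect (g : Lp ℂ 2 (volume : Measure ℝ)) {s : ℝ}
    (hs : s ≠ 0) (K : Finset ℤ) (d : ℤ → ℂ) (x : ℝ) (n : ℤ) :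
    ‖STFT g (∑ k ∈ K, conj (d k) • Translate (s * k) (Reflect g)) x (n / s)‖ =
      ‖STFT g (∑ k ∈ K, d k • Translate (s * k) (Reflect g)) x (n / s)‖ := by
  refine norm_map_sum_conj_smul (STFTₗ g x (n / s)) _ K d (E := exp (2 * π * I * (n / s) * x))
    ?_ fun k _ => ?_
  · rw [show 2 * π * I * (n / s) * x = ((2 * π * (n / s) * x : ℝ) : ℂ) * I by push_cast; ring]
    exact norm_exp_ofReal_mul_I _
  · have hs' : (s : ℂ) ≠ 0 := ofReal_ne_zero.mpr hs
    rw [STFTₗ_apply, conj_STFT_Translate_Reflect]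
    congr 1
    rw [show 2 * π * I * ((n / s : ℝ) : ℂ) * ((s * k : ℝ) + x) =
        (n * k : ℤ) * (2 * π * I) + 2 * π * I * (n / s) * x by push_cast; field_simp,
      Complex.exp_add, exp_int_mul_two_pi_mul_I, one_mul]

/-- If `g ≠ 0`, `s > 0` and `c` is a finitely supported sequence in `ℓ²_𝒪(ℤ)`, then
`f₁ = ∑ₖ cₖ T_{sk}(Rg)` and `f₂ = ∑ₖ conj(cₖ) T_{sk}(Rg)` have spectrograms that agree
pointwise on the parallel lines `ℝ × (1/s)ℤ`, yet do not agree up to a global phase. -/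
theorem stmt17 (g : Lp ℂ 2 (volume : Measure ℝ)) (hg : g ≠ 0) (s : ℝ) (hs : 0 < s)
    (c : ℤ →₀ ℂ) (hc : NotOnLine fun k => c k) :
    (∀ x : ℝ, ∀ n : ℤ,
      ‖STFT g (∑ k ∈ c.support, c k • Translate (s * k) (Reflect g)) x (n / s)‖ =
      ‖STFT g
        (∑ k ∈ c.support, (starRingEnd ℂ) (c k) • Translate (s * k) (Reflect g)) x (n / s)‖) ∧
    ¬ SamePhase (∑ k ∈ c.support, c k • Translate (s * k) (Reflect g))
      (∑ k ∈ c.support, (starRingEnd ℂ) (c k) • Translate (s * k) (Reflect g)) := by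
  refine ⟨fun x n => (norm_STFT_sum_conj_smul_Translate_Reflect g hs.ne' _ _ x n).symm, ?_⟩
  rintro ⟨ν, hν, hphase⟩
  have hRg : Reflect g ≠ 0 := by rwa [← norm_ne_zero_iff, norm_Reflect, norm_ne_zero_iff]
  have hcoeff := (linearIndependent_Translate hs hRg).coeff_eq_smul_of_sum_eq_smul_sum hphase
  refine hc (exists_line_of_forall_eq_mul_conj hν fun k => ?_)
  by_cases hk : k ∈ c.support
  · exact hcoeff k hk
  · simp [Finsupp.notMem_support_iff.mp hk]
end
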